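/- arXiv:2508.05601 — 2 statements merged into one kernel-verified Lean document; each statement's English description precedes it below -/
import Mathlib

section
/- Let B and B' be bases of a matroid. Then there is a bijection ψ: B → B' such that for each x ∈ B, the set (B' \ {ψ(x)}) ∪ {x} is independent. -/
/-!
Let `N x ⊆ B'` be the set of `y` that can be exchanged for `x`, i.e. with `(B' \ {y}) ∪ {x}`
independent. If `x ∉ B'`, the fundamental circuit of `x` in `B' ∪ {x}` lies in `N x ∪ {x}`, so
`x` is spanned by `N x`; if `x ∈ B'`, then `x ∈ N x`. Hence any `S ⊆ B` is spanned by the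
independent set `⋃ x ∈ S, N x`, which therefore has at least `|S|` elements. This is Hall's
condition, so the sets `N x` have a system of distinct representatives `ψ x`; since
`|B| = |B'|`, the injection `ψ : B → B'` is a bijection.
-/

open Set

theorem Set.exists_injective_forall_mem_of_forall_encard_le {ι α : Type*} (t : ι → Set α)
    (ht : ∀ i, (t i).Finite)
    (hall : ∀ s : Finset ι, (s : Set ι).encard ≤ (⋃ i ∈ s, t i).encard) :
    ∃ f : ι → α, f.Injective ∧ ∀ i, f i ∈ t i := by
  classical
  simp_rw [← (ht _).mem_toFinset]
  refine (Finset.all_card_le_biUnion_card_iff_exists_injective fun i ↦ (ht i).toFinset).1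
    fun s ↦ ?_
  have hunion : ((s.biUnion fun i ↦ (ht i).toFinset : Finset α) : Set α) = ⋃ i ∈ s, t i := by
    simp
  have hs := hall s
  rwa [encard_coe_eq_coe_finsetCard, ← hunion, encard_coe_eq_coe_finsetCard, Nat.cast_le] at hs

theorem Set.InjOn.bijOn_of_encard_le {α β : Type*} {f : α → β} {s : Set α} {t : Set β}
    (hinj : InjOn f s) (hf : MapsTo f s t) (ht : t.Finite) (hts : t.encard ≤ s.encard) :
    BijOn f s t := by
  refine ⟨hf, hinj, ?_⟩
  rw [SurjOn, (ht.subset hf.image_subset).eq_of_subset_of_encard_le hf.image_subset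
    (by rwa [hinj.encard_image])]

namespace Matroid

variable {α : Type*} {M : Matroid α} {I J X : Set α} {x : α}

def exchangeSet (M : Matroid α) (x : α) (I : Set α) : Set α :=
  {y ∈ I | M.Indep (insert x (I \ {y}))}

lemma exchangeSet_subset (M : Matroid α) (x : α) (I : Set α) : M.exchangeSet x I ⊆ I :=
  fun _ hy ↦ hy.1

lemma Indep.mem_closure_exchangeSet (hI : M.Indep I) (hx : x ∈ M.closure I) :
    x ∈ M.closure (M.exchangeSet x I) := by
  by_cases hxI : x ∈ I
  · refine M.subset_closure _ ((M.exchangeSet_subset x I).trans hI.subset_ground) ⟨hxI, ?_⟩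
    rwa [insert_sdiff_singleton, insert_eq_of_mem hxI]
  have hC := hI.fundCircuit_isCircuit hx hxI
  refine M.closure_subset_closure (fun y hy ↦ ?_)
    (hC.mem_closure_sdiff_singleton_of_mem (M.mem_fundCircuit x I))
  obtain ⟨hyC, hyx : y ≠ x⟩ := hy
  refine ⟨?_, ?_⟩
  · exact ((M.fundCircuit_subset_insert x I) hyC).resolve_left hyx
  · rw [insert_sdiff_singleton_comm (Ne.symm hyx)]
    exact (hI.mem_fundCircuit_iff hx hxI).1 hyC

lemma Indep.encard_le_encard_of_subset_closure (hI : M.Indep I) (hIX : I ⊆ M.closure X) :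
    I.encard ≤ X.encard :=
  calc I.encard ≤ M.eRk (M.closure X) := hI.encard_le_eRk_of_subset hIX
    _ = M.eRk X := M.eRk_closure_eq X
    _ ≤ X.encard := M.eRk_le_encard X

lemma Indep.encard_le_encard_biUnion_exchangeSet (hI : M.Indep I) (hJ : M.Indep J)
    (hIJ : I ⊆ M.closure J) : I.encard ≤ (⋃ x ∈ I, M.exchangeSet x J).encard :=
  hI.encard_le_encard_of_subset_closure fun _ hx ↦
    M.closure_subset_closure (subset_biUnion_of_mem hx) (hJ.mem_closure_exchangeSet (hIJ hx))

lemma Indep.exists_injective_mem_exchangeSet (hI : M.Indep I) (hJ : M.Indep J) (hJfin : J.Finite)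
    (hIJ : I ⊆ M.closure J) : ∃ f : I → α, f.Injective ∧ ∀ x : I, f x ∈ M.exchangeSet x J := by
  refine exists_injective_forall_mem_of_forall_encard_le _
    (fun _ ↦ hJfin.subset (M.exchangeSet_subset _ _)) fun s ↦ ?_
  have hsI : Subtype.val '' (s : Set I) ⊆ I := Subtype.coe_image_subset I s
  have hall := (hI.subset hsI).encard_le_encard_biUnion_exchangeSet hJ (hsI.trans hIJ)
  rwa [Subtype.val_injective.encard_image, biUnion_image] at hall

end Matroid

/-- Brualdi. For bases `B` and `B'` of a matroid there is a bijection
`ψ : B → B'` such that `(B' \ {ψ x}) ∪ {x}` is independent for every `x ∈ B`. -/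
theorem stmt3 {α : Type*} (M : Matroid α) [M.Finite] (B B' : Set α)
    (hB : M.IsBase B) (hB' : M.IsBase B') :
    ∃ ψ : α → α, Set.BijOn ψ B B' ∧
      ∀ x ∈ B, M.Indep (insert x (B' \ {ψ x})) := by
  classical
  obtain ⟨f, hf_inj, hf_mem⟩ := hB.indep.exists_injective_mem_exchangeSet hB'.indep hB'.finite
    (hB'.closure_eq ▸ hB.subset_ground)
  refine ⟨fun a ↦ if h : a ∈ B then f ⟨a, h⟩ else a, InjOn.bijOn_of_encard_le
    (fun a ha b hb hab ↦ ?_) (fun a ha ↦ ?_) hB'.finite (hB'.encard_eq_encard_of_isBase hB).le,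
    fun a ha ↦ ?_⟩
  · simpa using congrArg Subtype.val (hf_inj (by simpa [ha, hb] using hab))
  · simpa [ha] using (hf_mem ⟨a, ha⟩).1
  · simpa [ha] using (hf_mem ⟨a, ha⟩).2
end

section
/- Let k' < k be positive integers and let U and U' be disjoint subsets of a matroid with |U'| ≤ k − k'. If U' ∩ span(D_{k'}(U)) = ∅, then D_k(U) = D_k(U ∪ U'), where D_k(X) denotes the k-deadlock of X, i.e., the unique inclusion-wise maximal k-overcrowded subset of X. -/
noncomputable def mrk {α : Type*} (M : Matroid α) (X : Set α) : ℕ :=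
  sSup {n | ∃ I, I ⊆ X ∧ M.Indep I ∧ I.ncard = n}

def mspan {α : Type*} (M : Matroid α) (X : Set α) : Set α :=
  {x ∈ M.E | mrk M (X ∪ {x}) = mrk M X}

/-- A set `S` is `k`-overcrowded if `|S \ Sp| ≥ k·(rk S − rk Sp)` for every `Sp ⊆ S`. -/
def Overcrowded {α : Type*} (M : Matroid α) (k : ℕ) (S : Set α) : Prop :=
  ∀ Sp ⊆ S, k * (mrk M S - mrk M Sp) ≤ (S \ Sp).ncard

/-- `D` is the `k`-deadlock of `U`: the inclusion-wise maximal `k`-overcrowded subset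
of `U`. -/
def IsDeadlock {α : Type*} (M : Matroid α) (k : ℕ) (U D : Set α) : Prop :=
  D ⊆ U ∧ Overcrowded M k D ∧ ∀ S ⊆ U, Overcrowded M k S → S ⊆ D

/-!
Let `D₃ = D_k(U ∪ U')` and `T = D₃ \ U'`. Since at most `k - k' < k` elements of `D₃` lie
outside `T`, overcrowdedness of `D₃` forces `rk T = rk D₃`, and the same count shows that `T` is
still `k'`-overcrowded, so `T ⊆ D_{k'}(U)`. Hence `D₃ ⊆ span T ⊆ span D_{k'}(U)`, which misses
`U'`; thus `D₃ ⊆ U`, and a `k`-deadlock of `U ∪ U'` lying in `U` is the `k`-deadlock of `U`.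
-/

open Set

namespace Matroid

variable {α : Type*} {M : Matroid α} [M.RankFinite] {I X Y : Set α}

lemma mrk_eq_ncard_of_isBasis' (hI : M.IsBasis' I X) : mrk M X = I.ncard := by
  refine IsGreatest.csSup_eq ⟨⟨I, hI.subset, hI.indep, rfl⟩, ?_⟩
  rintro n ⟨J, hJX, hJ, rfl⟩
  have hJI : J.encard ≤ I.encard := hI.encard_eq_eRk ▸ hJ.encard_le_eRk_of_subset hJX
  rwa [← hJ.finite.cast_ncard_eq, ← hI.indep.finite.cast_ncard_eq, Nat.cast_le] at hJI

lemma cast_mrk_eq_eRk (M : Matroid α) [M.RankFinite] (X : Set α) :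
    (mrk M X : ℕ∞) = M.eRk X := by
  obtain ⟨I, hI⟩ := M.exists_isBasis' X
  rw [mrk_eq_ncard_of_isBasis' hI, hI.indep.finite.cast_ncard_eq, hI.eRk_eq_encard]

lemma mrk_mono (hXY : X ⊆ Y) : mrk M X ≤ mrk M Y := by
  exact_mod_cast (cast_mrk_eq_eRk M X).trans_le
    ((M.eRk_mono hXY).trans (cast_mrk_eq_eRk M Y).ge)

lemma mspan_eq_closure (M : Matroid α) [M.RankFinite] (X : Set α) : mspan M X = M.closure X := by
  ext x
  simp only [mspan, mem_ofPred_eq, union_singleton, ← Nat.cast_inj (R := ℕ∞), cast_mrk_eq_eRk]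
  refine ⟨fun ⟨hxE, hrk⟩ ↦ by_contra fun hx ↦ ?_, fun hx ↦ ⟨mem_ground_of_mem_closure hx, ?_⟩⟩
  · rw [eRk_insert_eq_add_one ⟨hxE, hx⟩] at hrk
    exact ((ENat.add_one_le_iff (M.isRkFinite_set X).eRk_lt_top.ne).1 hrk.le).false
  · rw [← eRk_insert_closure_eq, insert_eq_of_mem hx, eRk_closure_eq]

lemma inter_ground_subset_closure_of_mrk_le (hXY : X ⊆ Y) (h : mrk M Y ≤ mrk M X) :
    Y ∩ M.E ⊆ M.closure X := by
  rw [(M.isRkFinite_set X).closure_eq_closure_of_subset_of_eRk_ge_eRk hXY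
    (by rw [← cast_mrk_eq_eRk, ← cast_mrk_eq_eRk]; exact_mod_cast h)]
  exact M.inter_ground_subset_closure Y

end Matroid

section Overcrowded

variable {α : Type*} {M : Matroid α} {k k' : ℕ} {S T U V D D' : Set α}

lemma Overcrowded.mrk_le_of_ncard_diff_lt (hS : Overcrowded M k S) (hTS : T ⊆ S)
    (h : (S \ T).ncard < k) : mrk M S ≤ mrk M T := by
  by_contra! hlt
  have hpos : 0 < mrk M S - mrk M T := Nat.sub_pos_of_lt hlt
  have := (Nat.le_mul_of_pos_right k hpos).trans (hS T hTS)
  omega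

lemma Overcrowded.of_subset_of_ncard_diff_add_le [M.RankFinite] (hS : Overcrowded M k S)
    (hTS : T ⊆ S) (h : (S \ T).ncard + k' ≤ k) : Overcrowded M k' T := by
  intro Sp hSp
  set d := mrk M T - mrk M Sp
  obtain hd | hd := Nat.eq_zero_or_pos d
  · simp [hd]
  have hdS : d ≤ mrk M S - mrk M Sp := Nat.sub_le_sub_right (Matroid.mrk_mono hTS) _
  have hkd : k * d ≤ (S \ T).ncard + (T \ Sp).ncard :=
    calc k * d ≤ k * (mrk M S - mrk M Sp) := Nat.mul_le_mul_left k hdS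
      _ ≤ (S \ Sp).ncard := hS Sp (hSp.trans hTS)
      _ ≤ (S \ T).ncard + (T \ Sp).ncard := sdiff_union_sdiff_cancel hTS hSp ▸ ncard_union_le _ _
  nlinarith

lemma IsDeadlock.eq_of_subset (h : IsDeadlock M k U D) (h' : IsDeadlock M k V D') (hUV : U ⊆ V)
    (hD'U : D' ⊆ U) : D = D' :=
  (h'.2.2 D (h.1.trans hUV) h.2.1).antisymm (h.2.2 D' hD'U h'.2.1)

end Overcrowded

theorem stmt9_general {α : Type*} (M : Matroid α) [M.Finite] (k k' : ℕ)
    (hk' : 0 < k') (hkk : k' < k)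
    (U U' : Set α) (hU' : U' ⊆ M.E)
    (hcard : U'.ncard ≤ k - k')
    (D₁ D₂ D₃ : Set α)
    (hD₁ : IsDeadlock M k' U D₁) (hD₂ : IsDeadlock M k U D₂)
    (hD₃ : IsDeadlock M k (U ∪ U') D₃)
    (hspan : Disjoint U' (mspan M D₁)) :
    D₂ = D₃ := by
  set T := D₃ \ U'
  have hcardT : (D₃ \ T).ncard + k' ≤ k := by
    have := ncard_le_ncard (inter_subset_right (s := D₃)) (M.set_finite U' hU')
    rw [sdiff_sdiff_right_self]
    omega
  have hlt : (D₃ \ T).ncard < k := by omega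
  have hTD₁ : T ⊆ D₁ := hD₁.2.2 T (fun x hx ↦ (hD₃.1 hx.1).resolve_right hx.2)
    (hD₃.2.1.of_subset_of_ncard_diff_add_le sdiff_subset hcardT)
  have hD₃span : D₃ ∩ M.E ⊆ M.closure D₁ :=
    (Matroid.inter_ground_subset_closure_of_mrk_le sdiff_subset
      (hD₃.2.1.mrk_le_of_ncard_diff_lt sdiff_subset hlt)).trans
      (M.closure_subset_closure hTD₁)
  have hD₃U : D₃ ⊆ U := fun x hx ↦ (hD₃.1 hx).resolve_right fun hxU' ↦
    disjoint_left.1 hspan hxU' (Matroid.mspan_eq_closure M D₁ ▸ hD₃span ⟨hx, hU' hxU'⟩)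
  exact hD₂.eq_of_subset hD₃ subset_union_left hD₃U

/-- For positive integers `k' < k` and disjoint sets `U, U'` with
`|U'| ≤ k − k'` and `U' ∩ span(D_{k'}(U)) = ∅`, we have `D_k(U) = D_k(U ∪ U')`. -/
theorem stmt9 {α : Type*} (M : Matroid α) [M.Finite] (k k' : ℕ)
    (hk' : 0 < k') (hkk : k' < k)
    (U U' : Set α) (hU : U ⊆ M.E) (hU' : U' ⊆ M.E) (hdisj : Disjoint U U')
    (hcard : U'.ncard ≤ k - k')
    (D₁ D₂ D₃ : Set α)
    (hD₁ : IsDeadlock M k' U D₁) (hD₂ : IsDeadlock M k U D₂)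
    (hD₃ : IsDeadlock M k (U ∪ U') D₃)
    (hspan : Disjoint U' (mspan M D₁)) :
    D₂ = D₃ :=
  stmt9_general M k k' hk' hkk U U' hU' hcard D₁ D₂ D₃ hD₁ hD₂ hD₃ hspan
end
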